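/- arXiv:2207.03292 — 4 statements merged into one kernel-verified Lean document; each statement's English description precedes it below -/
import Mathlib

section
/- Let ι be a finite index set, K : ι → ι → ℝ symmetric with K_{mn} ≥ 0 for all m, n, and θ, θ* : ι → ℝ with δ_{mn} = θ_m − θ_n and δ*_{mn} = θ*_m − θ*_n. Assume for every pair m ≠ n with K_{mn} > 0 that δ*_{mn} ∈ (−π/2, π/2) and δ_{mn} ∈ (−π − δ*_{mn}, π − δ*_{mn}). Then Σ_{(m,n), m < n} K_{mn} · (δ_{mn} − δ*_{mn}) · (sin δ*_{mn} − sin δ_{mn}) ≤ 0, and the sum is strictly negative if in addition there exists a pair m ≠ n with K_{mn} > 0 and δ_{mn} ≠ δ*_{mn}. -/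
open Finset Real

lemma key_neg (a b : ℝ) (ha : a ∈ Set.Ioo (-(π/2)) (π/2))
    (hb : b ∈ Set.Ioo (-π - a) (π - a)) (hne : b ≠ a) :
    (b - a) * (Real.sin a - Real.sin b) < 0 := by
  obtain ⟨ha1, ha2⟩ := ha
  obtain ⟨hb1, hb2⟩ := hb
  have hpi := Real.pi_pos
  have hsub : Real.sin b - Real.sin a = 2 * Real.sin ((b-a)/2) * Real.cos ((b+a)/2) :=
    Real.sin_sub_sin b a
  have hcos : 0 < Real.cos ((b+a)/2) :=
    Real.cos_pos_of_mem_Ioo ⟨by linarith, by linarith⟩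
  rcases lt_or_gt_of_ne hne with h | h
  · have hs : 0 < Real.sin ((a-b)/2) :=
      Real.sin_pos_of_pos_of_lt_pi (by linarith) (by linarith)
    have heq : Real.sin ((b-a)/2) = - Real.sin ((a-b)/2) := by
      rw [show (b-a)/2 = -((a-b)/2) by ring, Real.sin_neg]
    rw [heq] at hsub
    nlinarith [mul_pos (sub_pos.2 h) (mul_pos hs hcos)]
  · have hs : 0 < Real.sin ((b-a)/2) :=
      Real.sin_pos_of_pos_of_lt_pi (by linarith) (by linarith)
    nlinarith [mul_pos (sub_pos.2 h) (mul_pos hs hcos)]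

/-- For symmetric nonnegative coupling `K`, if for every pair `m ≠ n` with
`K m n > 0` the equilibrium difference `δ*_{mn} = θs m - θs n` lies in
`(-π/2, π/2)` and the difference `δ_{mn} = θ m - θ n` lies in
`(-π - δ*_{mn}, π - δ*_{mn})`, then the pairwise Lyapunov dissipation sum is
nonpositive; it is strictly negative if moreover some pair `m ≠ n` with
`K m n > 0` has `δ_{mn} ≠ δ*_{mn}`. -/
theorem dissipation_sum_nonpos_and_neg
    {ι : Type*} [Fintype ι] [LinearOrder ι]
    (K : ι → ι → ℝ) (hsym : ∀ m n, K m n = K n m) (hnonneg : ∀ m n, 0 ≤ K m n)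
    (θ θs : ι → ℝ)
    (hreg : ∀ m n, m ≠ n → 0 < K m n →
      (θs m - θs n) ∈ Set.Ioo (-(π / 2)) (π / 2) ∧
      (θ m - θ n) ∈ Set.Ioo (-π - (θs m - θs n)) (π - (θs m - θs n))) :
    (∑ p ∈ Finset.univ.filter (fun p : ι × ι => p.1 < p.2),
        K p.1 p.2 * ((θ p.1 - θ p.2) - (θs p.1 - θs p.2))
          * (Real.sin (θs p.1 - θs p.2) - Real.sin (θ p.1 - θ p.2))) ≤ 0 ∧
    ((∃ m n, m ≠ n ∧ 0 < K m n ∧ θ m - θ n ≠ θs m - θs n) →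
      (∑ p ∈ Finset.univ.filter (fun p : ι × ι => p.1 < p.2),
          K p.1 p.2 * ((θ p.1 - θ p.2) - (θs p.1 - θs p.2))
            * (Real.sin (θs p.1 - θs p.2) - Real.sin (θ p.1 - θ p.2))) < 0) := by
  set f : ι × ι → ℝ := fun p =>
      K p.1 p.2 * ((θ p.1 - θ p.2) - (θs p.1 - θs p.2))
        * (Real.sin (θs p.1 - θs p.2) - Real.sin (θ p.1 - θ p.2)) with hf
  have htermlt : ∀ m n : ι, m ≠ n → 0 < K m n → θ m - θ n ≠ θs m - θs n →
      f (m, n) < 0 := by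
    intro m n hmn hK he
    obtain ⟨h1, h2⟩ := hreg m n hmn hK
    have := key_neg (θs m - θs n) (θ m - θ n) h1 h2 he
    simpa [hf, mul_assoc] using mul_neg_of_pos_of_neg hK this
  have hterm : ∀ m n : ι, m ≠ n → f (m, n) ≤ 0 := by
    intro m n hmn
    rcases eq_or_lt_of_le (hnonneg m n) with hK | hK
    · simp [hf, ← hK]
    · rcases eq_or_ne (θ m - θ n) (θs m - θs n) with he | he
      · simp [hf, he]
      · exact (htermlt m n hmn hK he).le
  have hle : ∀ p ∈ Finset.univ.filter (fun p : ι × ι => p.1 < p.2), f p ≤ 0 := by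
    intro p hp
    rw [Finset.mem_filter] at hp
    exact hterm p.1 p.2 (ne_of_lt hp.2)
  constructor
  · exact Finset.sum_nonpos hle
  · rintro ⟨m, n, hmn, hK, hne⟩
    have key : ∃ p ∈ Finset.univ.filter (fun p : ι × ι => p.1 < p.2), f p < 0 := by
      rcases lt_or_gt_of_ne hmn with h | h
      · exact ⟨(m, n), by simp [h], htermlt m n hmn hK hne⟩
      · refine ⟨(n, m), by simp [h], htermlt n m hmn.symm (by rw [← hsym]; exact hK) ?_⟩
        intro he
        apply hne
        have : θ n - θ m = θs n - θs m := he
        linarith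
    calc (∑ p ∈ Finset.univ.filter (fun p : ι × ι => p.1 < p.2), f p)
        < ∑ _p ∈ Finset.univ.filter (fun p : ι × ι => p.1 < p.2), (0:ℝ) :=
          Finset.sum_lt_sum hle key
      _ = 0 := by simp
end

section
/- Let ι be a finite index set, K : ι → ι → ℝ symmetric, D : ι → ℝ with D_m > 0 for all m, θ* : ι → ℝ, and set P*_m = Σ_n K_{mn} · sin(θ*_m − θ*_n). Suppose θ : ℝ → ι → ℝ is differentiable and satisfies, for all t and all m, the reduced swing equation (θ_m)'(t) = D_m^{−1} · (P*_m − Σ_n K_{mn} · sin(θ_m(t) − θ_n(t))). Define H(t) = Σ_m (1/2) D_m (θ*_m − θ_m(t))². Then H is differentiable and for all t, H'(t) = Σ_{(m,n), m < n} K_{mn} · (δ_{mn}(t) − δ*_{mn}) · (sin δ*_{mn} − sin δ_{mn}(t)), where δ_{mn}(t) = θ_m(t) − θ_n(t) and δ*_{mn} = θ*_m − θ*_n. -/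
open Finset Real

/-!
Along a trajectory, `H' = ∑ₘ Dₘ (θₘ - θ*ₘ) θ̇ₘ`, and the swing equation turns `Dₘ θ̇ₘ` into
`∑ₙ Kₘₙ (sin δ*ₘₙ - sin δₘₙ)`. The resulting double sum pairs the symmetric weight `Kₘₙ` with
the antisymmetric factor `sin δ*ₘₙ - sin δₘₙ`, so folding the terms `(m, n)` and `(n, m)`
together replaces `θₘ - θ*ₘ` by the difference `δₘₙ - δ*ₘₙ`.
-/

theorem Finset.sum_eq_sum_lt_add_swap {ι M : Type*} [Fintype ι] [LinearOrder ι]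
    [AddCommMonoid M] (f : ι × ι → M) (hf : ∀ i, f (i, i) = 0) :
    ∑ p, f p = ∑ p : ι × ι with p.1 < p.2, (f p + f p.swap) := by
  have hswap : ∑ p : ι × ι with p.1 < p.2, f p.swap = ∑ p : ι × ι with p.2 < p.1, f p :=
    sum_equiv (Equiv.prodComm ι ι) (by simp) (by simp)
  have hdiag : ∑ p : ι × ι with ¬p.1 < p.2 ∧ ¬p.2 < p.1, f p = 0 :=
    sum_eq_zero fun ⟨i, j⟩ hp => by
      simp only [mem_filter, mem_univ, true_and, not_lt] at hp
      obtain rfl : i = j := le_antisymm hp.2 hp.1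
      exact hf i
  rw [sum_add_distrib, hswap, ← sum_filter_add_sum_filter_not univ (fun p : ι × ι => p.1 < p.2),
    ← sum_filter_add_sum_filter_not (univ.filter fun p : ι × ι => ¬p.1 < p.2)
      (fun p => p.2 < p.1), filter_filter, filter_filter, hdiag, add_zero]
  congr 2
  ext p
  simp only [mem_filter, mem_univ, true_and, and_iff_right_iff_imp]
  exact lt_asymm

theorem Finset.sum_sum_mul_eq_sum_lt_mul_sub {ι R : Type*} [Fintype ι] [LinearOrder ι]
    [CommRing R] [IsAddTorsionFree R] {K a : ι → ι → R} (hK : ∀ m n, K m n = K n m)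
    (ha : ∀ m n, a n m = -a m n) (x : ι → R) :
    ∑ m, ∑ n, K m n * x m * a m n =
      ∑ p : ι × ι with p.1 < p.2, K p.1 p.2 * (x p.1 - x p.2) * a p.1 p.2 := by
  have ha_diag : ∀ m, a m m = 0 := fun m => self_eq_neg.1 (ha m m)
  rw [← Fintype.sum_prod_type', sum_eq_sum_lt_add_swap _ fun m => by simp [ha_diag]]
  refine sum_congr rfl fun p _ => ?_
  rw [Prod.fst_swap, Prod.snd_swap, hK p.2, ha p.2]
  ring

theorem hasDerivAt_sum_half_mul_sq_sub {ι : Type*} [Fintype ι] {D c v : ι → ℝ}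
    {θ : ℝ → ι → ℝ} {t : ℝ} (hθ : ∀ m, HasDerivAt (fun s => θ s m) (v m) t) :
    HasDerivAt (fun s => ∑ m, 1 / 2 * D m * (c m - θ s m) ^ 2)
      (∑ m, (θ t m - c m) * (D m * v m)) t := by
  refine (HasDerivAt.fun_sum fun m _ =>
    (((hθ m).const_sub (c m)).pow 2).const_mul (1 / 2 * D m)).congr_deriv (sum_congr rfl fun m _ => by ring)

/-- Along any differentiable solution of the reduced (inertia-free) swing
equation `θ̇_m = D_m⁻¹ (P*_m - ∑ n, K m n sin (θ_m - θ_n))`, the Lyapunov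
function `H t = ∑ m, (1/2) * D m * (θs m - θ t m)²` is differentiable with
derivative `∑_{m<n} K m n (δ_{mn}(t) - δ*_{mn}) (sin δ*_{mn} - sin δ_{mn}(t))`. -/
theorem lyapunov_hasDerivAt
    {ι : Type*} [Fintype ι] [LinearOrder ι]
    (K : ι → ι → ℝ) (hK : ∀ m n, K m n = K n m)
    (D : ι → ℝ) (hD : ∀ m, 0 < D m)
    (θs : ι → ℝ) (Ps : ι → ℝ)
    (hPs : ∀ m, Ps m = ∑ n, K m n * Real.sin (θs m - θs n))
    (θ : ℝ → ι → ℝ) (hdiff : ∀ m, Differentiable ℝ (fun t => θ t m))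
    (hswing : ∀ t m, deriv (fun s => θ s m) t =
      (D m)⁻¹ * (Ps m - ∑ n, K m n * Real.sin (θ t m - θ t n))) :
    ∀ t, HasDerivAt (fun t => ∑ m, (1 / 2) * D m * (θs m - θ t m) ^ 2)
      (∑ p ∈ Finset.univ.filter (fun p : ι × ι => p.1 < p.2),
        K p.1 p.2 * ((θ t p.1 - θ t p.2) - (θs p.1 - θs p.2))
          * (Real.sin (θs p.1 - θs p.2) - Real.sin (θ t p.1 - θ t p.2))) t := by
  intro t
  have hθ : ∀ m, HasDerivAt (fun s => θ s m)
      ((D m)⁻¹ * ∑ n, K m n * (sin (θs m - θs n) - sin (θ t m - θ t n))) t := fun m => by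
    simpa only [hswing, hPs, ← sum_sub_distrib, mul_sub] using (hdiff m t).hasDerivAt
  have hsin_antisymm : ∀ m n, sin (θs n - θs m) - sin (θ t n - θ t m)
      = -(sin (θs m - θs n) - sin (θ t m - θ t n)) := fun m n => by
    rw [← neg_sub (θs m), ← neg_sub (θ t m), sin_neg, sin_neg]
    ring
  refine (hasDerivAt_sum_half_mul_sq_sub hθ).congr_deriv ?_
  have hsum := sum_sum_mul_eq_sum_lt_mul_sub hK hsin_antisymm fun m => θ t m - θs m
  refine (sum_congr rfl fun m _ => ?_).trans (hsum.trans (sum_congr rfl fun p _ => by ring))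
  rw [mul_inv_cancel_left₀ (hD m).ne', mul_sum]
  exact sum_congr rfl fun n _ => by ring
end

section
/- Let ι be a finite index set, K : ι → ι → ℝ symmetric with K_{mn} ≥ 0, D : ι → ℝ with D_m > 0, θ* : ι → ℝ, and P*_m = Σ_n K_{mn} · sin(θ*_m − θ*_n). Suppose θ : ℝ → ι → ℝ is differentiable and satisfies the reduced swing equation (θ_m)'(t) = D_m^{−1} · (P*_m − Σ_n K_{mn} · sin(θ_m(t) − θ_n(t))) for all t and m. Suppose further that for all t in an interval [a, b] and every pair m ≠ n with K_{mn} > 0, one has δ*_{mn} := θ*_m − θ*_n ∈ (−π/2, π/2) and θ_m(t) − θ_n(t) ∈ (−π − δ*_{mn}, π − δ*_{mn}). Then the function t ↦ H(t) = Σ_m (1/2) D_m (θ*_m − θ_m(t))² is nonincreasing (antitone) on [a, b]. -/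
open Finset Real

/-!
Differentiating `H` along the flow gives `H' = -∑ m, (θs m - θ m) (P m(θs) - P m(θ))`, where
`P m(θ) = ∑ n, K m n sin (θ m - θ n)` is the power flow. Since `K` is symmetric, pairing the
terms `(m, n)` and `(n, m)` turns twice this sum into `∑ K m n (δs - δ) (sin δs - sin δ)` over the
pairwise differences `δs = θs m - θs n` and `δ = θ m - θ n`, and every such term is nonnegative as
long as `δs ∈ (-π/2, π/2)` and `δ ∈ (-π - δs, π - δs)`.
-/

noncomputable def powerFlow {ι : Type*} [Fintype ι] (K : ι → ι → ℝ) (θ : ι → ℝ) (m : ι) : ℝ :=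
  ∑ n, K m n * sin (θ m - θ n)

theorem mul_sin_nonneg_of_abs_le_pi {x : ℝ} (hx : |x| ≤ π) : 0 ≤ x * sin x := by
  rcases le_total 0 x with h | h
  · exact mul_nonneg h (sin_nonneg_of_nonneg_of_le_pi h (le_of_abs_le hx))
  · exact mul_nonneg_of_nonpos_of_nonpos h
      (sin_nonpos_of_nonpos_of_neg_pi_le h (neg_le_of_abs_le hx))

theorem sub_mul_sin_sub_sin_nonneg {u v : ℝ} (hu : u ∈ Set.Ioo (-(π / 2)) (π / 2))
    (hv : v ∈ Set.Ioo (-π - u) (π - u)) : 0 ≤ (u - v) * (sin u - sin v) := by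
  obtain ⟨hu₁, hu₂⟩ := hu
  obtain ⟨hv₁, hv₂⟩ := hv
  -- `sin u - sin v = 2 sin ((u - v) / 2) cos ((u + v) / 2)`, with `|u + v| < π` and `|u - v| < 2π`
  have hcos : 0 < cos ((u + v) / 2) := cos_pos_of_mem_Ioo ⟨by linarith, by linarith⟩
  have hsin : 0 ≤ (u - v) / 2 * sin ((u - v) / 2) :=
    mul_sin_nonneg_of_abs_le_pi (abs_le.2 ⟨by linarith, by linarith⟩)
  calc 0 ≤ 4 * ((u - v) / 2 * sin ((u - v) / 2)) * cos ((u + v) / 2) := by positivity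
    _ = (u - v) * (sin u - sin v) := by rw [sin_sub_sin]; ring

theorem sum_sum_nonneg_of_add_swap_nonneg {ι R : Type*} [Fintype ι] [AddCommGroup R]
    [LinearOrder R] [IsOrderedAddMonoid R] {B : ι → ι → R}
    (hB : ∀ m n, 0 ≤ B m n + B n m) : 0 ≤ ∑ m, ∑ n, B m n := by
  have hdouble : 0 ≤ (∑ m, ∑ n, B m n) + ∑ m, ∑ n, B m n := by
    nth_rw 2 [sum_comm]
    simp only [← sum_add_distrib]
    exact sum_nonneg fun m _ => sum_nonneg fun n _ => hB m n
  by_contra! hneg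
  exact (add_neg hneg hneg).not_ge hdouble

theorem sum_sub_mul_powerFlow_sub_nonneg {ι : Type*} [Fintype ι] (K : ι → ι → ℝ)
    (hsym : ∀ m n, K m n = K n m) (hnonneg : ∀ m n, 0 ≤ K m n) (x y : ι → ℝ)
    (hreg : ∀ m n, m ≠ n → 0 < K m n →
      x m - x n ∈ Set.Ioo (-(π / 2)) (π / 2) ∧
      y m - y n ∈ Set.Ioo (-π - (x m - x n)) (π - (x m - x n))) :
    0 ≤ ∑ m, (x m - y m) * (powerFlow K x m - powerFlow K y m) := by
  simp only [powerFlow, ← sum_sub_distrib, mul_sum]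
  refine sum_sum_nonneg_of_add_swap_nonneg fun m n => ?_
  have hpair : (x m - y m) * (K m n * sin (x m - x n) - K m n * sin (y m - y n)) +
      (x n - y n) * (K n m * sin (x n - x m) - K n m * sin (y n - y m)) =
      K m n * ((x m - x n - (y m - y n)) * (sin (x m - x n) - sin (y m - y n))) := by
    rw [hsym n m, ← neg_sub (x m) (x n), ← neg_sub (y m) (y n), sin_neg, sin_neg]
    ring
  rw [hpair]
  rcases (hnonneg m n).eq_or_lt with hK | hK
  · rw [← hK, zero_mul]
  rcases eq_or_ne m n with rfl | hmn
  · simp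
  obtain ⟨hx, hy⟩ := hreg m n hmn hK
  exact mul_nonneg hK.le (sub_mul_sin_sub_sin_nonneg hx hy)

theorem hasDerivAt_sum_half_mul_sub_sq {ι : Type*} [Fintype ι] (D c : ι → ℝ)
    {f : ℝ → ι → ℝ} {f' : ι → ℝ} {t : ℝ} (hf : ∀ m, HasDerivAt (fun s => f s m) (f' m) t) :
    HasDerivAt (fun s => ∑ m, 1 / 2 * D m * (c m - f s m) ^ 2)
      (-∑ m, D m * (c m - f t m) * f' m) t := by
  rw [← sum_neg_distrib]
  refine HasDerivAt.fun_sum fun m _ => ?_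
  refine ((((hf m).const_sub (c m)).fun_pow 2).const_mul (1 / 2 * D m)).congr_deriv ?_
  norm_num
  ring

theorem lyapunov_antitoneOn_general
    {ι : Type*} [Fintype ι]
    (K : ι → ι → ℝ) (hsym : ∀ m n, K m n = K n m) (hnonneg : ∀ m n, 0 ≤ K m n)
    (D : ι → ℝ) (hD : ∀ m, 0 < D m)
    (θs : ι → ℝ) (Ps : ι → ℝ)
    (hPs : ∀ m, Ps m = ∑ n, K m n * Real.sin (θs m - θs n))
    (θ : ℝ → ι → ℝ) (hdiff : ∀ m, Differentiable ℝ (fun t => θ t m))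
    (hswing : ∀ t m, deriv (fun s => θ s m) t =
      (D m)⁻¹ * (Ps m - ∑ n, K m n * Real.sin (θ t m - θ t n)))
    (a b : ℝ)
    (hreg : ∀ t ∈ Set.Icc a b, ∀ m n, m ≠ n → 0 < K m n →
      (θs m - θs n) ∈ Set.Ioo (-(π / 2)) (π / 2) ∧
      (θ t m - θ t n) ∈ Set.Ioo (-π - (θs m - θs n)) (π - (θs m - θs n))) :
    AntitoneOn (fun t => ∑ m, (1 / 2) * D m * (θs m - θ t m) ^ 2)
      (Set.Icc a b) := by
  have hH : ∀ t, HasDerivAt (fun t => ∑ m, (1 / 2) * D m * (θs m - θ t m) ^ 2)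
      (-∑ m, D m * (θs m - θ t m) * deriv (fun s => θ s m) t) t := fun t =>
    hasDerivAt_sum_half_mul_sub_sq D θs fun m => (hdiff m t).hasDerivAt
  refine antitoneOn_of_hasDerivWithinAt_nonpos (convex_Icc a b)
    (fun t _ => (hH t).continuousAt.continuousWithinAt) (fun t _ => (hH t).hasDerivWithinAt)
    fun t ht => ?_
  have hflow : ∀ m, D m * (θs m - θ t m) * deriv (fun s => θ s m) t =
      (θs m - θ t m) * (powerFlow K θs m - powerFlow K (θ t) m) := by
    intro m
    rw [hswing, hPs, mul_comm (D m), mul_assoc, mul_inv_cancel_left₀ (hD m).ne']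
    rfl
  rw [sum_congr rfl fun m _ => hflow m, neg_nonpos]
  exact sum_sub_mul_powerFlow_sub_nonneg K hsym hnonneg θs (θ t) (hreg t (interior_subset ht))

/-- Along any differentiable solution of the reduced (inertia-free) swing
equation such that on `[a, b]` every coupled pair `m ≠ n` (with `K m n > 0`)
has equilibrium difference in `(-π/2, π/2)` and angle difference strictly
between the two closest unstable equilibrium points, the Lyapunov function
`H t = ∑ m, (1/2) * D m * (θs m - θ t m)²` is nonincreasing on `[a, b]`. -/
theorem lyapunov_antitoneOn
    {ι : Type*} [Fintype ι] [LinearOrder ι]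
    (K : ι → ι → ℝ) (hsym : ∀ m n, K m n = K n m) (hnonneg : ∀ m n, 0 ≤ K m n)
    (D : ι → ℝ) (hD : ∀ m, 0 < D m)
    (θs : ι → ℝ) (Ps : ι → ℝ)
    (hPs : ∀ m, Ps m = ∑ n, K m n * Real.sin (θs m - θs n))
    (θ : ℝ → ι → ℝ) (hdiff : ∀ m, Differentiable ℝ (fun t => θ t m))
    (hswing : ∀ t m, deriv (fun s => θ s m) t =
      (D m)⁻¹ * (Ps m - ∑ n, K m n * Real.sin (θ t m - θ t n)))
    (a b : ℝ)
    (hreg : ∀ t ∈ Set.Icc a b, ∀ m n, m ≠ n → 0 < K m n →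
      (θs m - θs n) ∈ Set.Ioo (-(π / 2)) (π / 2) ∧
      (θ t m - θ t n) ∈ Set.Ioo (-π - (θs m - θs n)) (π - (θs m - θs n))) :
    AntitoneOn (fun t => ∑ m, (1 / 2) * D m * (θs m - θ t m) ^ 2)
      (Set.Icc a b) :=
  lyapunov_antitoneOn_general K hsym hnonneg D hD θs Ps hPs θ hdiff hswing a b hreg
end

section
/- Let ι be a finite index set, K : ι → ι → ℝ symmetric with K_{mn} ≥ 0, D : ι → ℝ with D_m > 0, θ* : ι → ℝ, and P*_m = Σ_n K_{mn} · sin(θ*_m − θ*_n). Suppose θ : ℝ → ι → ℝ is differentiable and satisfies the reduced swing equation (θ_m)'(t) = D_m^{−1} · (P*_m − Σ_n K_{mn} · sin(θ_m(t) − θ_n(t))) for all t and m. Fix t₀, and assume that for every pair m ≠ n with K_{mn} > 0, δ*_{mn} := θ*_m − θ*_n ∈ (−π/2, π/2) and θ_m(t₀) − θ_n(t₀) ∈ (−π − δ*_{mn}, π − δ*_{mn}), and that there exists at least one pair m ≠ n with K_{mn} > 0 and θ_m(t₀) − θ_n(t₀) ≠ δ*_{mn}. Then the derivative at t₀ of H(t)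 = Σ_m (1/2) D_m (θ*_m − θ_m(t))² is strictly negative. -/
open Finset Real

/-!
With `δ_mn = θ m - θ n`, along the flow
`H' = ∑ m, ∑ n, K m n (θ m - θs m) (sin δs_mn - sin δ_mn)`.
Pairing the `(m, n)` and `(n, m)` terms (`K` is symmetric) turns this into
`-(1/2) ∑ K m n (δ_mn - δs_mn) (sin δ_mn - sin δs_mn)`. Each summand is positive off the
equilibrium: `sin a - sin b = 2 sin ((a - b)/2) cos ((a + b)/2)`, the cosine is positive as
`|δ + δs| < π`, and `x sin x > 0` for `0 < |x| < π`, which applies as `|δ - δs| < 2π`.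
-/

theorem mul_sin_pos_of_ne_zero {x : ℝ} (hx0 : x ≠ 0) (hx : |x| < π) : 0 < x * sin x := by
  obtain ⟨hlo, hhi⟩ := abs_lt.mp hx
  rcases hx0.lt_or_gt with hneg | hpos
  · exact mul_pos_of_neg_of_neg hneg (sin_neg_of_neg_of_neg_pi_lt hneg hlo)
  · exact mul_pos hpos (sin_pos_of_pos_of_lt_pi hpos hhi)

theorem sub_mul_sin_sub_sin_pos {a b : ℝ} (hab : a ≠ b) (hsum : |a + b| < π)
    (hdiff : |a - b| < 2 * π) : 0 < (a - b) * (sin a - sin b) := by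
  have hcos : 0 < cos ((a + b) / 2) := by
    obtain ⟨hlo, hhi⟩ := abs_lt.mp hsum
    exact cos_pos_of_mem_Ioo ⟨by linarith, by linarith⟩
  have hhalf : 0 < (a - b) / 2 * sin ((a - b) / 2) :=
    mul_sin_pos_of_ne_zero (div_ne_zero (sub_ne_zero.mpr hab) two_ne_zero)
      (by rw [abs_div, abs_two]; linarith)
  calc 0 < 4 * ((a - b) / 2 * sin ((a - b) / 2)) * cos ((a + b) / 2) := by positivity
    _ = (a - b) * (sin a - sin b) := by rw [sin_sub_sin]; ring

theorem sub_mul_sin_sub_sin_nonneg_s8 {a b : ℝ} (hsum : |a + b| < π) (hdiff : |a - b| < 2 * π) :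
    0 ≤ (a - b) * (sin a - sin b) := by
  rcases eq_or_ne a b with rfl | hab
  · simp
  · exact (sub_mul_sin_sub_sin_pos hab hsum hdiff).le

theorem abs_add_lt_pi_and_abs_sub_lt_two_pi {δ δs : ℝ}
    (hδs : δs ∈ Set.Ioo (-(π / 2)) (π / 2)) (hδ : δ ∈ Set.Ioo (-π - δs) (π - δs)) :
    |δ + δs| < π ∧ |δ - δs| < 2 * π := by
  obtain ⟨h₁, h₂⟩ := hδs
  obtain ⟨h₃, h₄⟩ := hδ
  exact ⟨abs_lt.mpr ⟨by linarith, by linarith⟩, abs_lt.mpr ⟨by linarith, by linarith⟩⟩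

theorem Finset.sum_sum_neg_of_add_swap {ι : Type*} [Fintype ι] (G : ι → ι → ℝ)
    (hle : ∀ m n, G m n + G n m ≤ 0) (hlt : ∃ m n, G m n + G n m < 0) :
    ∑ m, ∑ n, G m n < 0 := by
  obtain ⟨m₀, n₀, h₀⟩ := hlt
  have hsymm : ∑ m, ∑ n, (G m n + G n m) < 0 :=
    sum_neg' (fun m _ => sum_nonpos fun n _ => hle m n)
      ⟨m₀, mem_univ _, sum_neg' (fun n _ => hle m₀ n) ⟨n₀, mem_univ _, h₀⟩⟩
  have hswap : ∑ m, ∑ n, (G m n + G n m) = 2 * ∑ m, ∑ n, G m n := by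
    simp only [sum_add_distrib]
    rw [sum_comm (f := fun m n => G n m)]
    ring
  linarith

theorem hasDerivAt_sum_half_mul_sq {ι : Type*} [Fintype ι] (D θs v : ι → ℝ)
    {θ : ℝ → ι → ℝ} {t₀ : ℝ} (hθ : ∀ m, HasDerivAt (fun t => θ t m) (v m) t₀) :
    HasDerivAt (fun t => ∑ m, (1 / 2) * D m * (θs m - θ t m) ^ 2)
      (∑ m, D m * (θ t₀ m - θs m) * v m) t₀ := by
  refine (HasDerivAt.fun_sum (u := univ) fun m _ =>
    (((hθ m).const_sub (θs m)).pow 2).const_mul ((1 / 2) * D m)).congr_deriv ?_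
  refine sum_congr rfl fun m _ => ?_
  push_cast
  ring

section Swing

variable {ι : Type*} (K : ι → ι → ℝ) (θs x : ι → ℝ)

theorem swing_power_mul_eq_sum [Fintype ι] {D : ℝ} (hD : D ≠ 0) (m : ι) :
    D * (x m - θs m) *
        (D⁻¹ * (∑ n, K m n * sin (θs m - θs n) - ∑ n, K m n * sin (x m - x n))) =
      ∑ n, K m n * (x m - θs m) * (sin (θs m - θs n) - sin (x m - x n)) := by
  rw [← sum_sub_distrib, mul_sum, mul_sum]
  refine sum_congr rfl fun n _ => ?_
  field_simp

theorem coupling_add_swap_eq (hsym : ∀ m n, K m n = K n m) (m n : ι) :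
    K m n * (x m - θs m) * (sin (θs m - θs n) - sin (x m - x n)) +
        K n m * (x n - θs n) * (sin (θs n - θs m) - sin (x n - x m)) =
      -(K m n * (((x m - x n) - (θs m - θs n)) * (sin (x m - x n) - sin (θs m - θs n)))) := by
  rw [← hsym m n, ← neg_sub (θs m) (θs n), ← neg_sub (x m) (x n), sin_neg, sin_neg]
  ring

end Swing

theorem lyapunov_deriv_neg_general
    {ι : Type*} [Fintype ι]
    (K : ι → ι → ℝ) (hsym : ∀ m n, K m n = K n m) (hnonneg : ∀ m n, 0 ≤ K m n)
    (D : ι → ℝ) (hD : ∀ m, 0 < D m)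
    (θs : ι → ℝ) (Ps : ι → ℝ)
    (hPs : ∀ m, Ps m = ∑ n, K m n * Real.sin (θs m - θs n))
    (θ : ℝ → ι → ℝ) (hdiff : ∀ m, Differentiable ℝ (fun t => θ t m))
    (hswing : ∀ t m, deriv (fun s => θ s m) t =
      (D m)⁻¹ * (Ps m - ∑ n, K m n * Real.sin (θ t m - θ t n)))
    (t₀ : ℝ)
    (hreg : ∀ m n, m ≠ n → 0 < K m n →
      (θs m - θs n) ∈ Set.Ioo (-(π / 2)) (π / 2) ∧
      (θ t₀ m - θ t₀ n) ∈ Set.Ioo (-π - (θs m - θs n)) (π - (θs m - θs n)))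
    (hne : ∃ m n, m ≠ n ∧ 0 < K m n ∧ θ t₀ m - θ t₀ n ≠ θs m - θs n) :
    deriv (fun t => ∑ m, (1 / 2) * D m * (θs m - θ t m) ^ 2) t₀ < 0 := by
  have hθ : ∀ m, HasDerivAt (fun t => θ t m) (deriv (fun s => θ s m) t₀) t₀ :=
    fun m => (hdiff m t₀).hasDerivAt
  rw [(hasDerivAt_sum_half_mul_sq D θs _ hθ).deriv]
  simp only [hswing, hPs, swing_power_mul_eq_sum K θs (θ t₀) (hD _).ne']
  apply Finset.sum_sum_neg_of_add_swap
  · intro m n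
    rw [coupling_add_swap_eq K θs (θ t₀) hsym, neg_nonpos]
    rcases eq_or_ne m n with rfl | hmn
    · simp
    rcases (hnonneg m n).eq_or_lt with hK | hK
    · simp [← hK]
    obtain ⟨hδs, hδ⟩ := hreg m n hmn hK
    obtain ⟨hsum, hspread⟩ := abs_add_lt_pi_and_abs_sub_lt_two_pi hδs hδ
    exact mul_nonneg hK.le (sub_mul_sin_sub_sin_nonneg_s8 hsum hspread)
  · obtain ⟨m, n, hmn, hK, hoff⟩ := hne
    refine ⟨m, n, ?_⟩
    rw [coupling_add_swap_eq K θs (θ t₀) hsym, neg_neg_iff_pos]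
    obtain ⟨hδs, hδ⟩ := hreg m n hmn hK
    obtain ⟨hsum, hspread⟩ := abs_add_lt_pi_and_abs_sub_lt_two_pi hδs hδ
    exact mul_pos hK (sub_mul_sin_sub_sin_pos hoff hsum hspread)

/-- Along any differentiable solution of the reduced (inertia-free) swing
equation, at a time `t₀` where every coupled pair `m ≠ n` (with `K m n > 0`)
has equilibrium difference in `(-π/2, π/2)` and angle difference strictly
between the two closest unstable equilibrium points, and at least one coupled
pair is away from its equilibrium difference, the Lyapunov function
`H t = ∑ m, (1/2) * D m * (θs m - θ t m)²` has strictly negative derivative. -/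
theorem lyapunov_deriv_neg
    {ι : Type*} [Fintype ι] [LinearOrder ι]
    (K : ι → ι → ℝ) (hsym : ∀ m n, K m n = K n m) (hnonneg : ∀ m n, 0 ≤ K m n)
    (D : ι → ℝ) (hD : ∀ m, 0 < D m)
    (θs : ι → ℝ) (Ps : ι → ℝ)
    (hPs : ∀ m, Ps m = ∑ n, K m n * Real.sin (θs m - θs n))
    (θ : ℝ → ι → ℝ) (hdiff : ∀ m, Differentiable ℝ (fun t => θ t m))
    (hswing : ∀ t m, deriv (fun s => θ s m) t =
      (D m)⁻¹ * (Ps m - ∑ n, K m n * Real.sin (θ t m - θ t n)))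
    (t₀ : ℝ)
    (hreg : ∀ m n, m ≠ n → 0 < K m n →
      (θs m - θs n) ∈ Set.Ioo (-(π / 2)) (π / 2) ∧
      (θ t₀ m - θ t₀ n) ∈ Set.Ioo (-π - (θs m - θs n)) (π - (θs m - θs n)))
    (hne : ∃ m n, m ≠ n ∧ 0 < K m n ∧ θ t₀ m - θ t₀ n ≠ θs m - θs n) :
    deriv (fun t => ∑ m, (1 / 2) * D m * (θs m - θ t m) ^ 2) t₀ < 0 :=
  lyapunov_deriv_neg_general K hsym hnonneg D hD θs Ps hPs θ hdiff hswing t₀ hreg hne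
end
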